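/- arXiv:2401.11047 — 5 statements merged into one kernel-verified Lean document; each statement's English description precedes it below -/
import Mathlib

section
/- For x ∈ ℤ and 0 < |k| < 1, (1/(2π)) ∫₀^{2π} e^{-i x t} / (2 cos t - k - 1/k) dt = k^{|x|} / (k - 1/k). -/
/-!
Substituting `z = exp (i t)` turns `2 cos t - k - 1/k` into `(z - k) (z - 1/k) / z`, so for `n ≥ 0`
the integral of `exp (i n t) / (2 cos t - k - 1/k)` is `-i` times the contour integral of
`z ^ n / ((z - k) (z - 1/k))` over the unit circle. Only the pole `k` lies inside, and the Cauchy
integral formula gives `2π k ^ n / (k - 1/k)`. The reflection `t ↦ 2π - t` fixes `cos t` and sends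
`exp (-i x t)` to `exp (i x t)`, so the integral depends on `x` only through `|x|`.
-/

open Complex Metric
open scoped Real

theorem circleIntegral_div_sub_mul_sub {R : ℝ} {c a b : ℂ} {f : ℂ → ℂ}
    (hf : DifferentiableOn ℂ f (closedBall c R)) (ha : a ∈ ball c R) (hb : b ∉ closedBall c R) :
    (∮ z in C(c, R), f z / ((z - a) * (z - b))) = 2 * π * I * (f a / (a - b)) := by
  have hg : DifferentiableOn ℂ (fun z => f z / (z - b)) (closedBall c R) :=
    hf.div (by fun_prop) fun z hz h => hb (sub_eq_zero.1 h ▸ hz)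
  calc (∮ z in C(c, R), f z / ((z - a) * (z - b)))
      = ∮ z in C(c, R), (z - a)⁻¹ • (f z / (z - b)) := by
        congr 1
        funext z
        rw [smul_eq_mul, div_eq_mul_inv, div_eq_mul_inv, mul_inv]
        ring
    _ = 2 * π * I * (f a / (a - b)) := hg.circleIntegral_sub_inv_smul ha

theorem two_mul_cos_sub_sub_one_div (w k : ℂ) (hk : k ≠ 0) :
    2 * cos w - k - 1 / k = (exp (w * I) - k) * (exp (w * I) - 1 / k) / exp (w * I) := by
  have hexp : exp (-w * I) = (exp (w * I))⁻¹ := by rw [← exp_neg, neg_mul]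
  rw [cos, neg_mul, ← neg_mul, hexp]
  field_simp
  ring

theorem integral_exp_nat_mul_div_two_mul_cos_sub (k : ℂ) (hk0 : k ≠ 0) (hk1 : ‖k‖ < 1) (n : ℕ) :
    ∫ t in (0 : ℝ)..(2 * π), exp (I * n * t) / (2 * cos t - k - 1 / k)
      = 2 * (π : ℂ) * (k ^ n / (k - 1 / k)) := by
  have hk_inv : 1 / k ∉ closedBall (0 : ℂ) 1 := by
    rw [mem_closedBall_zero_iff, not_le, norm_div, norm_one]
    exact (one_lt_div (norm_pos_iff.mpr hk0)).mpr hk1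
  have hcauchy := circleIntegral_div_sub_mul_sub (differentiableOn_pow n)
    (mem_ball_zero_iff.mpr hk1) hk_inv
  have hparam : (∮ z in C(0, 1), z ^ n / ((z - k) * (z - 1 / k)))
      = I * ∫ t in (0 : ℝ)..(2 * π), exp (I * n * t) / (2 * cos t - k - 1 / k) := by
    rw [circleIntegral, ← intervalIntegral.integral_const_mul]
    refine intervalIntegral.integral_congr fun t _ => ?_
    have hpow : exp (I * n * t) = exp (t * I) ^ n := by
      rw [← exp_nat_mul]
      ring_nf
    simp only [deriv_circleMap, circleMap_zero, ofReal_one, one_mul, smul_eq_mul]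
    rw [hpow, two_mul_cos_sub_sub_one_div _ _ hk0, div_div_eq_mul_div]
    ring
  refine mul_left_cancel₀ I_ne_zero ?_
  rw [← hparam, hcauchy]
  ring

theorem integral_exp_neg_int_mul_div_comp_cos (g : ℂ → ℂ) (x : ℤ) :
    ∫ t in (0 : ℝ)..(2 * π), exp (-I * x * t) / g (cos t)
      = ∫ t in (0 : ℝ)..(2 * π), exp (I * x * t) / g (cos t) := by
  have hreflect := intervalIntegral.integral_comp_sub_left (a := 0) (b := 2 * π)
    (fun t : ℝ => exp (-I * x * t) / g (cos t)) (2 * π)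
  rw [sub_self, sub_zero] at hreflect
  rw [← hreflect]
  refine intervalIntegral.integral_congr fun t _ => ?_
  have hexp : -I * x * (2 * π - t : ℝ) = (-x : ℤ) * (2 * π * I) + I * x * t := by
    push_cast
    ring
  rw [hexp, exp_add, exp_int_mul_two_pi_mul_I, one_mul, ofReal_sub, ofReal_mul, ofReal_ofNat,
    cos_two_pi_sub]

theorem integral_exp_neg_int_mul_div_comp_cos_eq_natAbs (g : ℂ → ℂ) (x : ℤ) :
    ∫ t in (0 : ℝ)..(2 * π), exp (-I * x * t) / g (cos t)
      = ∫ t in (0 : ℝ)..(2 * π), exp (I * x.natAbs * t) / g (cos t) := by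
  obtain ⟨n, rfl | rfl⟩ := Int.eq_nat_or_neg x
  · rw [integral_exp_neg_int_mul_div_comp_cos, Int.natAbs_natCast, Int.cast_natCast]
  · simp only [Int.natAbs_neg, Int.natAbs_natCast, Int.cast_neg, Int.cast_natCast, mul_neg,
      neg_mul, neg_neg]

theorem stmt_2 (k : ℂ) (hk0 : k ≠ 0) (hk1 : ‖k‖ < 1) (x : ℤ) :
    (1 / (2 * (Real.pi : ℂ))) *
        ∫ t in (0 : ℝ)..(2 * Real.pi),
          Complex.exp (-Complex.I * (x : ℂ) * (t : ℂ)) /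
            (2 * Complex.cos (t : ℂ) - k - 1 / k)
      = k ^ x.natAbs / (k - 1 / k) := by
  have hreduce := integral_exp_neg_int_mul_div_comp_cos_eq_natAbs (fun c => 2 * c - k - 1 / k) x
  have h2pi : 2 * (π : ℂ) ≠ 0 := by simp [Real.pi_ne_zero]
  rw [hreduce, integral_exp_nat_mul_div_two_mul_cos_sub k hk0 hk1, one_div,
    inv_mul_cancel_left₀ h2pi]
end

section
/- With R₀(x,x';k) = (k^{|x-x'|} - k^{x+x'})/(k - 1/k), for all x ≤ x' and all k ∈ ℂ with |k| ≤ 1 one has |R₀(x,x';k)| ≤ x · |k|^{|x-x'|+1}. -/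
/-- The Dirichlet half-line free resolvent kernel
R₀(x,x';k) = (k^{|x-x'|} - k^{x+x'})/(k - 1/k). -/
noncomputable def R0 (k : ℂ) (x x' : ℕ) : ℂ :=
  (k ^ Nat.dist x x' - k ^ (x + x')) / (k - 1 / k)

/-! Writing `x' = x + d`, the numerator is `k ^ d (1 - k ^ (2x))` and the denominator is
`(k² - 1) / k`, so `R₀ = -k ^ (d + 1) ∑_{j < x} k^(2j)`; each of the `x` terms of the geometric sum
has norm at most `1`. At `k² = 1` the denominator vanishes and `R₀ = 0` by Lean's convention. -/

open Finset

theorem norm_geom_sum_le_of_norm_le_one {𝕜 : Type*} [NormedDivisionRing 𝕜] {z : 𝕜}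
    (hz : ‖z‖ ≤ 1) (n : ℕ) : ‖∑ j ∈ range n, z ^ j‖ ≤ n := by
  calc ‖∑ j ∈ range n, z ^ j‖ ≤ ∑ _j ∈ range n, (1 : ℝ) :=
        norm_sum_le_of_le _ fun j _ => by rw [norm_pow]; exact pow_le_one₀ (norm_nonneg z) hz
    _ = n := by simp

theorem R0_eq_zero_of_sq_eq_one {k : ℂ} (hk : k ^ 2 = 1) (x x' : ℕ) : R0 k x x' = 0 := by
  have hk0 : k ≠ 0 := by rintro rfl; norm_num at hk
  have hden : k - 1 / k = 0 := by
    field_simp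
    linear_combination hk
  rw [R0, hden, div_zero]

theorem R0_add_eq_neg_mul_geom_sum {k : ℂ} (hk : k ^ 2 ≠ 1) (x d : ℕ) :
    R0 k x (x + d) = -(k ^ (d + 1) * ∑ j ∈ range x, (k ^ 2) ^ j) := by
  rcases eq_or_ne k 0 with rfl | hk0
  · simp [R0]
  have hden : k - 1 / k ≠ 0 := by
    rw [sub_ne_zero, ne_eq, eq_div_iff hk0, ← sq]
    exact hk
  rw [R0, Nat.dist_eq_sub_of_le (Nat.le_add_right x d), Nat.add_sub_cancel_left,
    geom_sum_eq hk, div_eq_iff hden]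
  field_simp
  ring

theorem stmt_4_general (k : ℂ) (hk : ‖k‖ ≤ 1) (x x' : ℕ) (hxx : x ≤ x') :
    ‖R0 k x x'‖ ≤ (x : ℝ) * ‖k‖ ^ (x' - x + 1) := by
  obtain ⟨d, rfl⟩ := Nat.exists_eq_add_of_le hxx
  rw [Nat.add_sub_cancel_left]
  by_cases hk1 : k ^ 2 = 1
  · rw [R0_eq_zero_of_sq_eq_one hk1, norm_zero]
    positivity
  rw [R0_add_eq_neg_mul_geom_sum hk1, norm_neg, norm_mul, norm_pow, mul_comm]
  gcongr
  exact norm_geom_sum_le_of_norm_le_one (by rw [norm_pow]; exact pow_le_one₀ (norm_nonneg k) hk) x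

theorem stmt_4 (k : ℂ) (hk : ‖k‖ ≤ 1) (x x' : ℕ) (hx : 1 ≤ x) (hxx : x ≤ x') :
    ‖R0 k x x'‖ ≤ (x : ℝ) * ‖k‖ ^ (x' - x + 1) :=
  stmt_4_general k hk x x' hxx
end

section
/- Let f, g be sequences with ‖f‖₁² := Σ_{x≥1} x² |f_x|² < ∞ and similarly for g, and 0 < |k| < 1. Then the operator with kernel f_x R₀(x,x';k) g_{x'}, where R₀(x,x';k) = (k^{|x-x'|} - k^{x+x'})/(k - 1/k), is Hilbert–Schmidt with norm at most √2 |k| ‖f‖₁ ‖g‖₁. -/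
open Finset

theorem tsum_tsum_le_tsum_mul_tsum_of_le_mul {α β : Type*} {a : α → β → ℝ} {F : α → ℝ}
    {G : β → ℝ} (ha : ∀ x y, 0 ≤ a x y) (hF : Summable F) (hG : Summable G)
    (h : ∀ x y, a x y ≤ F x * G y) :
    ∑' x, ∑' y, a x y ≤ (∑' x, F x) * ∑' y, G y := by
  have hrow_summable : ∀ x, Summable (a x) := fun x =>
    (hG.mul_left (F x)).of_nonneg_of_le (ha x) (h x)
  have hrow : ∀ x, ∑' y, a x y ≤ F x * ∑' y, G y := fun x => by
    rw [← tsum_mul_left]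
    exact (hrow_summable x).tsum_le_tsum (h x) (hG.mul_left _)
  have hbound : Summable fun x => F x * ∑' y, G y := hF.mul_right _
  calc ∑' x, ∑' y, a x y ≤ ∑' x, F x * ∑' y, G y :=
        (hbound.of_nonneg_of_le (fun x => tsum_nonneg (ha x)) hrow).tsum_le_tsum hrow hbound
    _ = (∑' x, F x) * ∑' y, G y := tsum_mul_right

theorem norm_geom_sum_le {R : Type*} [SeminormedRing R] [NormOneClass R] {z : R}
    (hz : ‖z‖ ≤ 1) (n : ℕ) : ‖∑ i ∈ range n, z ^ i‖ ≤ n := by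
  calc ‖∑ i ∈ range n, z ^ i‖ ≤ ∑ _i ∈ range n, (1 : ℝ) :=
        norm_sum_le_of_le _ fun i _ => (norm_pow_le z i).trans (pow_le_one₀ (norm_nonneg z) hz)
    _ = n := by simp

theorem R0_eq_neg_mul_geom_sum {k : ℂ} (hk : k ^ 2 ≠ 1) (x x' : ℕ) :
    R0 k x x' = -k ^ (Nat.dist x x' + 1) * ∑ i ∈ range (min x x'), (k ^ 2) ^ i := by
  have hsum : x + x' = Nat.dist x x' + 2 * min x x' := by
    rcases le_total x x' with h | h <;> simp [Nat.dist, h] <;> omega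
  have hden : k - 1 / k = (k ^ 2 - 1) / k := by
    rw [sub_div, sq, mul_self_div_self, one_div]
  have hgeo := geom_sum_mul (k ^ 2) (min x x')
  rw [R0, hsum, pow_add, pow_mul, hden, div_div_eq_mul_div, div_eq_iff (sub_ne_zero.mpr hk)]
  linear_combination (k ^ Nat.dist x x' * k) * hgeo

theorem norm_R0_le {k : ℂ} (hk : ‖k‖ < 1) (x x' : ℕ) :
    ‖R0 k x x'‖ ≤ ‖k‖ ^ (Nat.dist x x' + 1) * min x x' := by
  have hk2 : ‖k ^ 2‖ < 1 := by rw [norm_pow]; exact pow_lt_one₀ (norm_nonneg k) hk two_ne_zero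
  have hk2' : k ^ 2 ≠ 1 := fun h => by simp [h] at hk2
  rw [R0_eq_neg_mul_geom_sum hk2', norm_mul, norm_neg, norm_pow]
  exact mul_le_mul_of_nonneg_left (by exact_mod_cast norm_geom_sum_le hk2.le _)
    (by positivity)

theorem norm_R0_le_mul {k : ℂ} (hk : ‖k‖ < 1) (x x' : ℕ) : ‖R0 k x x'‖ ≤ ‖k‖ * x * x' := by
  have hpow : ‖k‖ ^ (Nat.dist x x' + 1) ≤ ‖k‖ :=
    pow_le_of_le_one (norm_nonneg k) hk.le (Nat.succ_ne_zero _)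
  have hmin : (min x x' : ℝ) ≤ x * x' := by
    rcases Nat.eq_zero_or_pos x' with h | h
    · simp [h]
    · exact_mod_cast (min_le_left x x').trans (Nat.le_mul_of_pos_right x h)
  calc ‖R0 k x x'‖ ≤ ‖k‖ ^ (Nat.dist x x' + 1) * min x x' := norm_R0_le hk x x'
    _ ≤ ‖k‖ * (x * x') := by gcongr; exact_mod_cast hmin
    _ = ‖k‖ * x * x' := by ring

theorem stmt_8_general (f g : ℕ → ℂ) (k : ℂ) (hk1 : ‖k‖ < 1)
    (hf : Summable fun x : ℕ => (x : ℝ) ^ 2 * ‖f x‖ ^ 2)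
    (hg : Summable fun x : ℕ => (x : ℝ) ^ 2 * ‖g x‖ ^ 2) :
    (∑' x : ℕ, ∑' x' : ℕ, ‖f x * R0 k x x' * g x'‖ ^ 2) ≤
      2 * ‖k‖ ^ 2 *
        (∑' x : ℕ, (x : ℝ) ^ 2 * ‖f x‖ ^ 2) *
        (∑' x : ℕ, (x : ℝ) ^ 2 * ‖g x‖ ^ 2) := by
  set Sf := ∑' x : ℕ, (x : ℝ) ^ 2 * ‖f x‖ ^ 2
  set Sg := ∑' x : ℕ, (x : ℝ) ^ 2 * ‖g x‖ ^ 2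
  have hterm : ∀ x x' : ℕ, ‖f x * R0 k x x' * g x'‖ ^ 2 ≤
      (‖k‖ ^ 2 * ((x : ℝ) ^ 2 * ‖f x‖ ^ 2)) * ((x' : ℝ) ^ 2 * ‖g x'‖ ^ 2) := fun x x' => by
    calc ‖f x * R0 k x x' * g x'‖ ^ 2 ≤ (‖f x‖ * (‖k‖ * x * x') * ‖g x'‖) ^ 2 := by
          rw [norm_mul, norm_mul]; gcongr; exact norm_R0_le_mul hk1 x x'
      _ = _ := by ring
  have hHS := tsum_tsum_le_tsum_mul_tsum_of_le_mul (fun _ _ => sq_nonneg _) (hf.mul_left _) hg hterm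
  rw [tsum_mul_left] at hHS
  have hprod : 0 ≤ ‖k‖ ^ 2 * Sf * Sg := by positivity
  linarith

theorem stmt_8 (f g : ℕ → ℂ) (k : ℂ) (hk0 : k ≠ 0) (hk1 : ‖k‖ < 1)
    (hf : Summable fun x : ℕ => (x : ℝ) ^ 2 * ‖f x‖ ^ 2)
    (hg : Summable fun x : ℕ => (x : ℝ) ^ 2 * ‖g x‖ ^ 2) :
    (∑' x : ℕ, ∑' x' : ℕ, ‖f x * R0 k x x' * g x'‖ ^ 2) ≤
      2 * ‖k‖ ^ 2 *
        (∑' x : ℕ, (x : ℝ) ^ 2 * ‖f x‖ ^ 2) *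
        (∑' x : ℕ, (x : ℝ) ^ 2 * ‖g x‖ ^ 2) :=
  stmt_8_general f g k hk1 hf hg
end

section
/- Under the self-adjoint finitely supported setting, the Jost matrix ψ(k) = f_0(k) satisfies the symmetry ψ(k) ψ(1/\bar k)^* = ψ(1/k) ψ(\bar k)^* for all k ≠ 0, and consequently the S-matrix S(k) = ψ(k)^{-1} ψ(1/k) satisfies S(\bar k) = S(k)^* = S(k)^{-1} for |k| = 1. -/
/-!
The Wronskian `L(x) a(x) R(x+1) - L(x+1) a(x) R(x)` of a left and a right solution of the
Jacobi recurrence does not depend on `x`. Pairing the left solutions `f(k̄)ᴴ`, `f(1/k̄)ᴴ` with the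
regular solution `φ` (`φ(0) = 0`, `φ(1) = 1`) computes `f(k̄, 0)ᴴ a(0)` and `f(1/k̄, 0)ᴴ a(0)` from
`φ(p+1)`, `φ(p+2)`. With these coefficients the right solution
`f(k) f(1/k̄, 0)ᴴ a(0) - f(1/k) f(k̄, 0)ᴴ a(0)` agrees with `(k - 1/k) φ` beyond `p`, so by backward
uniqueness it vanishes at `0` like `φ`; cancelling `a(0)` gives the symmetry. On `|k| = 1` the
symmetry reads `ψ(k) ψ(k)ᴴ = ψ(1/k) ψ(1/k)ᴴ`, which makes `S(k) = ψ(k)⁻¹ ψ(1/k)` unitary.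
-/

open Matrix

namespace JacobiRecurrence

variable {𝕜 A : Type*} [CommRing 𝕜] [Ring A] [Algebra 𝕜 A]

def IsRightSolution (a b : ℕ → A) (z : 𝕜) (R : ℕ → A) : Prop :=
  ∀ x, a x * R x + a (x + 1) * R (x + 2) + b (x + 1) * R (x + 1) = z • R (x + 1)

def IsLeftSolution (a b : ℕ → A) (z : 𝕜) (L : ℕ → A) : Prop :=
  ∀ x, L x * a x + L (x + 2) * a (x + 1) + L (x + 1) * b (x + 1) = z • L (x + 1)

def wronskian (a L R : ℕ → A) (x : ℕ) : A :=
  L x * a x * R (x + 1) - L (x + 1) * a x * R x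

variable {a b : ℕ → A} {z : 𝕜}

theorem IsRightSolution.sub {R S : ℕ → A} (hR : IsRightSolution a b z R)
    (hS : IsRightSolution a b z S) : IsRightSolution a b z (R - S) := fun x => by
  simp only [Pi.sub_apply, mul_sub, smul_sub, ← hR x, ← hS x]
  abel

theorem IsRightSolution.mul_const {R : ℕ → A} (hR : IsRightSolution a b z R) (c : A) :
    IsRightSolution a b z (fun x => R x * c) := fun x => by
  simp only [← mul_assoc, ← add_mul, hR x, smul_mul_assoc]

theorem IsRightSolution.smul {R : ℕ → A} (hR : IsRightSolution a b z R) (c : 𝕜) :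
    IsRightSolution a b z (c • R) := fun x => by
  simp only [Pi.smul_apply, mul_smul_comm, ← smul_add, hR x, smul_comm c z]

theorem wronskian_succ {L R : ℕ → A} (hL : IsLeftSolution a b z L)
    (hR : IsRightSolution a b z R) (x : ℕ) :
    wronskian a L R (x + 1) = wronskian a L R x := by
  have hR' : a (x + 1) * R (x + 2) = z • R (x + 1) - a x * R x - b (x + 1) * R (x + 1) := by
    rw [← hR x]; abel
  have hL' : L (x + 2) * a (x + 1) = z • L (x + 1) - L x * a x - L (x + 1) * b (x + 1) := by
    rw [← hL x]; abel
  simp only [wronskian, mul_assoc (L (x + 1)), hR', hL', mul_sub, sub_mul, mul_smul_comm,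
    smul_mul_assoc, mul_assoc]
  abel

theorem wronskian_eq_wronskian_zero {L R : ℕ → A} (hL : IsLeftSolution a b z L)
    (hR : IsRightSolution a b z R) (x : ℕ) : wronskian a L R x = wronskian a L R 0 := by
  induction x with
  | zero => rfl
  | succ x ih => rw [wronskian_succ hL hR, ih]

theorem IsRightSolution.apply_zero_eq_zero (ha : ∀ x, IsUnit (a x)) {u : ℕ → A}
    (hu : IsRightSolution a b z u) {n : ℕ} (h₀ : u n = 0) (h₁ : u (n + 1) = 0) : u 0 = 0 := by
  induction n with
  | zero => exact h₀
  | succ n ih =>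
    refine ih ?_ h₀
    have h := hu n
    rw [h₀, h₁, mul_zero, mul_zero, add_zero, add_zero, smul_zero] at h
    exact (ha n).mul_right_eq_zero.mp h

noncomputable def regularSolution (a b : ℕ → A) (z : 𝕜) : ℕ → A
  | 0 => 0
  | 1 => 1
  | x + 2 => Ring.inverse (a (x + 1)) * (z • regularSolution a b z (x + 1)
      - b (x + 1) * regularSolution a b z (x + 1) - a x * regularSolution a b z x)

theorem isRightSolution_regularSolution (ha : ∀ x, IsUnit (a x)) :
    IsRightSolution a b z (regularSolution a b z) := fun x => by
  rw [regularSolution.eq_3, Ring.mul_inverse_cancel_left _ _ (ha (x + 1))]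
  abel

theorem wronskian_regularSolution_zero (L : ℕ → A) :
    wronskian a L (regularSolution a b z) 0 = L 0 * a 0 := by
  simp [wronskian, regularSolution]

theorem IsLeftSolution.mul_apply_zero_eq (ha : ∀ x, IsUnit (a x)) {p : ℕ} (hap : a (p + 1) = 1)
    {G : ℕ → A} (hG : IsLeftSolution a b z G) {μ : 𝕜} (hGp : ∀ x, p < x → G x = μ ^ x • 1) :
    G 0 * a 0 = μ ^ (p + 1) • regularSolution a b z (p + 2)
      - μ ^ (p + 2) • regularSolution a b z (p + 1) := by
  rw [← wronskian_regularSolution_zero (b := b) (z := z) G,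
    ← wronskian_eq_wronskian_zero hG (isRightSolution_regularSolution ha) (p + 1), wronskian,
    hGp _ (by omega), hGp _ (by omega), hap]
  simp only [mul_one, smul_mul_assoc, one_mul]

theorem mul_apply_zero_eq_of_free_tail (ha : ∀ x, IsUnit (a x)) {p : ℕ} (hap : a (p + 1) = 1)
    {μ ν : 𝕜} (hμν : μ * ν = 1) {F₁ F₂ G₁ G₂ : ℕ → A}
    (hF₁ : IsRightSolution a b z F₁) (hF₂ : IsRightSolution a b z F₂)
    (hG₁ : IsLeftSolution a b z G₁) (hG₂ : IsLeftSolution a b z G₂)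
    (hF₁p : ∀ x, p < x → F₁ x = μ ^ x • 1) (hF₂p : ∀ x, p < x → F₂ x = ν ^ x • 1)
    (hG₁p : ∀ x, p < x → G₁ x = μ ^ x • 1) (hG₂p : ∀ x, p < x → G₂ x = ν ^ x • 1) :
    F₁ 0 * G₂ 0 = F₂ 0 * G₁ 0 := by
  have hG₁0 := hG₁.mul_apply_zero_eq ha hap hG₁p
  have hG₂0 := hG₂.mul_apply_zero_eq ha hap hG₂p
  set φ := regularSolution a b z
  have hφ : IsRightSolution a b z φ := isRightSolution_regularSolution ha
  -- `F₁ G₂(0) a(0) - F₂ G₁(0) a(0)` agrees with `(μ - ν) φ` beyond `p`, hence also at `0`.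
  set u := (fun x => F₁ x * (G₂ 0 * a 0)) - (fun x => F₂ x * (G₁ 0 * a 0)) - (μ - ν) • φ
  have hu : IsRightSolution a b z u :=
    ((hF₁.mul_const _).sub (hF₂.mul_const _)).sub (hφ.smul _)
  have hpow : (μ * ν) ^ (p + 1) = 1 := by rw [hμν, one_pow]
  have hu₀ : u (p + 1) = 0 := by
    simp only [u, Pi.sub_apply, Pi.smul_apply, hF₁p (p + 1) (by omega), hF₂p (p + 1) (by omega),
      hG₁0, hG₂0, smul_mul_assoc, one_mul]
    linear_combination (norm := module) (μ - ν) • hpow • φ (p + 1)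
  have hu₁ : u (p + 2) = 0 := by
    simp only [u, Pi.sub_apply, Pi.smul_apply, hF₁p (p + 2) (by omega), hF₂p (p + 2) (by omega),
      hG₁0, hG₂0, smul_mul_assoc, one_mul]
    linear_combination (norm := module) (μ - ν) • hpow • φ (p + 2)
  have h := hu.apply_zero_eq_zero ha hu₀ hu₁
  simp only [u, φ, Pi.sub_apply, Pi.smul_apply, regularSolution, smul_zero, sub_zero,
    ← mul_assoc, ← sub_mul] at h
  exact sub_eq_zero.mp ((ha 0).mul_left_eq_zero.mp h)

theorem IsRightSolution.isLeftSolution_star [StarRing 𝕜] [StarRing A] [StarModule 𝕜 A]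
    (ha : ∀ x, star (a x) = a x) (hb : ∀ x, star (b x) = b x) {R : ℕ → A}
    (hR : IsRightSolution a b z R) : IsLeftSolution a b (star z) (fun x => star (R x)) :=
  fun x => by simpa only [star_add, star_mul, star_smul, ha, hb] using congrArg star (hR x)

end JacobiRecurrence

theorem Matrix.nonsing_inv_mul_mul_conjTranspose_self {n R : Type*} [Fintype n] [DecidableEq n]
    [CommRing R] [StarRing R] {M N : Matrix n n R} (hM : IsUnit M.det) (h : M * Mᴴ = N * Nᴴ) :
    M⁻¹ * N * (M⁻¹ * N)ᴴ = 1 := by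
  have hM' : IsUnit Mᴴ.det := by rw [det_conjTranspose]; exact hM.star
  calc M⁻¹ * N * (M⁻¹ * N)ᴴ = M⁻¹ * (N * Nᴴ) * Mᴴ⁻¹ := by
        rw [conjTranspose_mul, conjTranspose_nonsing_inv]; simp only [mul_assoc]
    _ = 1 := by
        rw [← h, ← mul_assoc, nonsing_inv_mul _ hM, one_mul, mul_nonsing_inv _ hM']

open JacobiRecurrence in
theorem jost_mul_conjTranspose_symm {d : ℕ} (p : ℕ) (a b : ℕ → Matrix (Fin d) (Fin d) ℂ)
    (ha : ∀ x, (a x)ᴴ = a x) (hb : ∀ x, (b x)ᴴ = b x) (hainv : ∀ x, IsUnit (a x).det)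
    (hap : ∀ x, p < x → a x = 1) (f : ℂ → ℕ → Matrix (Fin d) (Fin d) ℂ)
    (hf : ∀ k : ℂ, k ≠ 0 → ∀ x : ℕ, 1 ≤ x →
      a (x - 1) * f k (x - 1) + a x * f k (x + 1) + b x * f k x = (k + 1 / k) • f k x)
    (hfp : ∀ k : ℂ, k ≠ 0 → ∀ x : ℕ, p < x → f k x = k ^ x • (1 : Matrix (Fin d) (Fin d) ℂ))
    (k : ℂ) (hk : k ≠ 0) :
    f k 0 * (f (1 / starRingEnd ℂ k) 0)ᴴ = f (1 / k) 0 * (f (starRingEnd ℂ k) 0)ᴴ := by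
  have hR : ∀ l : ℂ, l ≠ 0 → IsRightSolution a b (l + 1 / l) (f l) := fun l hl x => by
    simpa using hf l hl (x + 1) (by omega)
  have hL : ∀ l : ℂ, l ≠ 0 → IsLeftSolution a b (star (l + 1 / l)) (fun x => (f l x)ᴴ) :=
    fun l hl => (hR l hl).isLeftSolution_star ha hb
  have hk' : starRingEnd ℂ k ≠ 0 := by simpa using hk
  refine mul_apply_zero_eq_of_free_tail (z := k + 1 / k)
    (G₁ := fun x => (f (starRingEnd ℂ k) x)ᴴ) (G₂ := fun x => (f (1 / starRingEnd ℂ k) x)ᴴ)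
    (fun x => (isUnit_iff_isUnit_det _).mpr (hainv x)) (hap (p + 1) (by omega))
    (mul_one_div_cancel hk) (hR k hk) ?_ ?_ ?_ (hfp k hk) (hfp _ (by simpa using hk)) ?_ ?_
  · simpa [add_comm] using hR (1 / k) (by simpa using hk)
  · simpa using hL _ hk'
  · simpa [add_comm] using hL (1 / starRingEnd ℂ k) (by simpa using hk')
  · intro x hx; simp [hfp _ hk' x hx]
  · intro x hx; rw [hfp _ (one_div_ne_zero hk') x hx]; simp

theorem stmt_12_general {d : ℕ} (p : ℕ) (a b : ℕ → Matrix (Fin d) (Fin d) ℂ)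
    (ha : ∀ x, (a x)ᴴ = a x)
    (hb : ∀ x, (b x)ᴴ = b x)
    (hainv : ∀ x, IsUnit (a x).det)
    (hap : ∀ x, p < x → a x = 1)
    (f : ℂ → ℕ → Matrix (Fin d) (Fin d) ℂ)
    (hf : ∀ k : ℂ, k ≠ 0 → ∀ x : ℕ, 1 ≤ x →
      a (x - 1) * f k (x - 1) + a x * f k (x + 1) + b x * f k x = (k + 1 / k) • f k x)
    (hfp : ∀ k : ℂ, k ≠ 0 → ∀ x : ℕ, p < x → f k x = k ^ x • (1 : Matrix (Fin d) (Fin d) ℂ)) :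
    (∀ k : ℂ, k ≠ 0 →
      f k 0 * (f (1 / starRingEnd ℂ k) 0)ᴴ = f (1 / k) 0 * (f (starRingEnd ℂ k) 0)ᴴ) ∧
    (∀ k : ℂ, ‖k‖ = 1 → IsUnit (f k 0).det →
      (f (starRingEnd ℂ k) 0)⁻¹ * f (1 / starRingEnd ℂ k) 0
          = ((f k 0)⁻¹ * f (1 / k) 0)ᴴ ∧
      ((f k 0)⁻¹ * f (1 / k) 0)ᴴ = ((f k 0)⁻¹ * f (1 / k) 0)⁻¹) := by
  have hsym := jost_mul_conjTranspose_symm p a b ha hb hainv hap f hf hfp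
  refine ⟨hsym, fun k hk hdet => ?_⟩
  have hconj : starRingEnd ℂ k = 1 / k := by rw [one_div, Complex.inv_eq_conj hk]
  have hψ := hsym k (norm_ne_zero_iff.mp (by rw [hk]; exact one_ne_zero))
  rw [hconj, one_div_one_div] at hψ
  have hS := nonsing_inv_mul_mul_conjTranspose_self hdet hψ
  rw [hconj, one_div_one_div, ← inv_eq_right_inv hS, Matrix.mul_inv_rev,
    nonsing_inv_nonsing_inv _ hdet]
  exact ⟨rfl, rfl⟩

theorem stmt_12 {d : ℕ} (p : ℕ) (a b : ℕ → Matrix (Fin d) (Fin d) ℂ)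
    (ha : ∀ x, (a x)ᴴ = a x)
    (hb : ∀ x, (b x)ᴴ = b x)
    (hainv : ∀ x, IsUnit (a x).det)
    (hap : ∀ x, p < x → a x = 1)
    (hbp : ∀ x, p < x → b x = 0)
    (f : ℂ → ℕ → Matrix (Fin d) (Fin d) ℂ)
    (hf : ∀ k : ℂ, k ≠ 0 → ∀ x : ℕ, 1 ≤ x →
      a (x - 1) * f k (x - 1) + a x * f k (x + 1) + b x * f k x = (k + 1 / k) • f k x)
    (hfp : ∀ k : ℂ, k ≠ 0 → ∀ x : ℕ, p < x → f k x = k ^ x • (1 : Matrix (Fin d) (Fin d) ℂ)) :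
    (∀ k : ℂ, k ≠ 0 →
      f k 0 * (f (1 / starRingEnd ℂ k) 0)ᴴ = f (1 / k) 0 * (f (starRingEnd ℂ k) 0)ᴴ) ∧
    (∀ k : ℂ, ‖k‖ = 1 → IsUnit (f k 0).det →
      (f (starRingEnd ℂ k) 0)⁻¹ * f (1 / starRingEnd ℂ k) 0
          = ((f k 0)⁻¹ * f (1 / k) 0)ᴴ ∧
      ((f k 0)⁻¹ * f (1 / k) 0)ᴴ = ((f k 0)⁻¹ * f (1 / k) 0)⁻¹) :=
  stmt_12_general p a b ha hb hainv hap f hf hfp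
end

section
/- Let f₁, f₂ be functions with log f_j in the Hardy space H²(D) on the unit disc, satisfying f_j(k) = 1 + o(1) as k → 0, with arguments φ_j(t) = arg f_j(t) continuous on the unit circle minus one point, and e^{−2iφ₁(t)} = e^{−2iφ₂(t)} for a.e. t on the circle. Then f₁ = f₂ on the unit disc. -/
/-!
Let `h = g₁ - g₂`. Its radial boundary values have imaginary part `φ₁ - φ₂`, which lies in `πℤ`
almost everywhere on the arc, hence everywhere by continuity, hence is a constant `c` because the
arc is connected. By Cauchy's formula, for `n ≥ 1` the `n`-th Fourier coefficient of
`θ ↦ Im h(ρ e^{iθ})` is `π i ρⁿ conj(h⁽ⁿ⁾(0)) / n!`. As `ρ → 1` these functions stay bounded in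
`L²` and converge a.e. to `c`, so they are uniformly integrable and (Vitali) their Fourier
coefficients converge to those of the constant `c`, which vanish. Hence every derivative of `h`
at `0` vanishes and `h` is constant on the disc; `exp h = f₁ / f₂ → 1` at `0` then gives
`exp h ≡ 1`, i.e. `f₁ = f₂`.
-/

open Complex Metric MeasureTheory
open Filter Topology Set
open scoped NNReal ENNReal ComplexConjugate Nat Real

namespace MeasureTheory

variable {α β : Type*} {m : MeasurableSpace α} {μ : Measure α} [NormedAddCommGroup β]

theorem unifIntegrable_of_eLpNorm_le {ι : Type*} {p q : ℝ≥0∞} (hp : p ≠ 0) (hpq : p < q)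
    {f : ι → α → β} (hf : ∀ i, AEStronglyMeasurable (f i) μ) {C : ℝ≥0}
    (hC : ∀ i, eLpNorm (f i) q μ ≤ C) : UnifIntegrable f p μ := by
  set r := 1 / p.toReal - 1 / q.toReal
  have hr : 0 < r := by
    have hp' : 0 < p.toReal := ENNReal.toReal_pos hp hpq.ne_top
    rcases eq_or_ne q ⊤ with rfl | hq
    · simpa [r] using hp'
    · have hpq_real := (ENNReal.toReal_lt_toReal hpq.ne_top hq).2 hpq
      simp only [r, sub_pos]
      gcongr
  intro ε hε
  refine ⟨(ε / (C + 1)) ^ r⁻¹, by positivity, fun i s hs hμs => ?_⟩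
  calc eLpNorm (s.indicator (f i)) p μ = eLpNorm (f i) p (μ.restrict s) :=
        eLpNorm_indicator_eq_eLpNorm_restrict hs
    _ ≤ eLpNorm (f i) q (μ.restrict s) * μ.restrict s univ ^ r :=
        eLpNorm_le_eLpNorm_mul_rpow_measure_univ hpq.le (hf i).restrict
    _ ≤ C * ENNReal.ofReal ((ε / (C + 1)) ^ r⁻¹) ^ r := by
        rw [Measure.restrict_apply_univ]
        gcongr
        exact (eLpNorm_restrict_le _ _ _ _).trans (hC i)
    _ = ENNReal.ofReal (C * (ε / (C + 1))) := by
        rw [ENNReal.ofReal_rpow_of_nonneg (by positivity) hr.le, ← Real.rpow_mul (by positivity),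
          inv_mul_cancel₀ hr.ne', Real.rpow_one, ENNReal.ofReal_mul (by positivity),
          ENNReal.ofReal_coe_nnreal]
    _ ≤ ENNReal.ofReal ε := by
        gcongr
        rw [mul_div_assoc']
        exact div_le_of_le_mul₀ (by positivity) hε.le (by nlinarith)

theorem eLpNorm_two_le_of_integral_sq_le {f : α → ℝ} (hf : MemLp f 2 μ) {M : ℝ}
    (hM : ∫ x, f x ^ 2 ∂μ ≤ M) : eLpNorm f 2 μ ≤ ENNReal.ofReal √M := by
  rw [hf.eLpNorm_eq_integral_rpow_norm two_ne_zero ENNReal.ofNat_ne_top]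
  simp only [ENNReal.toReal_ofNat, Real.rpow_two, Real.norm_eq_abs, sq_abs]
  rw [← one_div, ← Real.sqrt_eq_rpow]
  gcongr

theorem tendsto_integral_mul_of_tendsto_ae [IsFiniteMeasure μ] {u : ℕ → α → ℝ} {c : ℝ}
    (hu : ∀ k, AEStronglyMeasurable (u k) μ) {C : ℝ≥0} (hC : ∀ k, eLpNorm (u k) 2 μ ≤ C)
    (hlim : ∀ᵐ x ∂μ, Tendsto (fun k => u k x) atTop (𝓝 c))
    {e : α → ℂ} (he : AEStronglyMeasurable e μ) (he_le : ∀ x, ‖e x‖ ≤ 1) :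
    Tendsto (fun k => ∫ x, (u k x : ℂ) * e x ∂μ) atTop (𝓝 (∫ x, (c : ℂ) * e x ∂μ)) := by
  have hL2 (k : ℕ) : MemLp (u k) 2 μ := ⟨hu k, (hC k).trans_lt ENNReal.coe_lt_top⟩
  have hL1 : Tendsto (fun k => eLpNorm (u k - fun _ => c) 1 μ) atTop (𝓝 0) :=
    tendsto_Lp_finite_of_tendsto_ae le_rfl ENNReal.one_ne_top hu (memLp_const c)
      (unifIntegrable_of_eLpNorm_le one_ne_zero ENNReal.one_lt_two hu hC) hlim
  refine tendsto_integral_of_L1' _ (aestronglyMeasurable_const.mul he)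
    (Eventually.of_forall fun k => ((hL2 k).integrable one_le_two).ofReal.mul_bdd he
      (ae_of_all _ he_le))
    (tendsto_of_tendsto_of_tendsto_of_le_of_le tendsto_const_nhds hL1 (fun _ => bot_le)
      fun k => eLpNorm_mono fun x => ?_)
  calc ‖(u k x : ℂ) * e x - c * e x‖ = ‖u k x - c‖ * ‖e x‖ := by
        rw [← sub_mul, norm_mul, ← ofReal_sub, norm_real]
    _ ≤ ‖u k x - c‖ := mul_le_of_le_one_right (norm_nonneg _) (he_le x)

end MeasureTheory

theorem Function.Periodic.setIntegral_Ioo_eq_intervalIntegral {E : Type*}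
    [NormedAddCommGroup E] [NormedSpace ℝ E] {F : ℝ → E} {T : ℝ} (hF : Function.Periodic F T)
    (hT : 0 ≤ T) (t : ℝ) : ∫ θ in Ioo t (t + T), F θ = ∫ θ in 0..T, F θ := by
  rw [← integral_Ioc_eq_integral_Ioo, ← intervalIntegral.integral_of_le (by linarith),
    hF.intervalIntegral_add_eq t 0, zero_add]

theorem sub_mem_zmultiples_pi_of_exp_eq {x y : ℝ}
    (h : exp (-2 * I * (x : ℂ)) = exp (-2 * I * (y : ℂ))) :
    x - y ∈ AddSubgroup.zmultiples π := by
  obtain ⟨n, hn⟩ := exp_eq_exp_iff_exists_int.1 h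
  refine ⟨-n, ?_⟩
  have : ((x - y : ℝ) : ℂ) = ((-n • π : ℝ) : ℂ) := by
    push_cast
    linear_combination (I / 2) * hn + (x - y + n * π) * I_sq
  exact_mod_cast this.symm

theorem exists_forall_sub_eq_of_ae_exp_eq {φ₁ φ₂ : ℝ → ℝ} {a b : ℝ}
    (hc₁ : ContinuousOn φ₁ (Ioo a b)) (hc₂ : ContinuousOn φ₂ (Ioo a b))
    (hae : ∀ᵐ θ ∂volume.restrict (Ioo a b),
      exp (-2 * I * (φ₁ θ : ℂ)) = exp (-2 * I * (φ₂ θ : ℂ))) :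
    ∃ c, ∀ θ ∈ Ioo a b, φ₁ θ - φ₂ θ = c := by
  have hexp := Measure.eqOn_open_of_ae_eq hae isOpen_Ioo (by fun_prop) (by fun_prop)
  rcases (Ioo a b).eq_empty_or_nonempty with h | ⟨θ₀, hθ₀⟩
  · exact ⟨0, by simp [h]⟩
  refine ⟨φ₁ θ₀ - φ₂ θ₀, fun θ hθ => ?_⟩
  refine isPreconnected_Ioo.constant_of_mapsTo (isDiscrete_iff_discreteTopology.2
    (inferInstanceAs (DiscreteTopology (AddSubgroup.zmultiples π))))
    (hc₁.sub hc₂) (fun θ hθ => sub_mem_zmultiples_pi_of_exp_eq (hexp hθ)) hθ hθ₀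

namespace Complex

theorem eqOn_ball_of_iteratedDeriv_eq_zero {f : ℂ → ℂ} {c : ℂ} {r : ℝ}
    (hf : DifferentiableOn ℂ f (ball c r)) (h : ∀ n ≠ 0, iteratedDeriv n f c = 0) :
    EqOn f (fun _ => f c) (ball c r) := fun z hz =>
  ((hasSum_single 0 fun n hn => by simp [h n hn]).unique
    (hasSum_taylorSeries_on_ball hf hz)).symm.trans (by simp)

variable {f : ℂ → ℂ} {ρ : ℝ}

theorem continuous_comp_circleMap (hf : DifferentiableOn ℂ f (closedBall 0 ρ)) (hρ : 0 ≤ ρ) :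
    Continuous fun θ => f (circleMap 0 ρ θ) :=
  hf.continuousOn.comp_continuous (continuous_circleMap 0 ρ) (circleMap_mem_closedBall 0 hρ)

theorem integral_comp_circleMap_div_exp_pow (hf : DifferentiableOn ℂ f (closedBall 0 ρ))
    (hρ : 0 < ρ) (n : ℕ) :
    ∫ θ in 0..2 * π, f (circleMap 0 ρ θ) / exp (θ * I) ^ n
      = 2 * π * ρ ^ n * iteratedDeriv n f 0 / n ! := by
  have hcauchy := hf.circleIntegral_one_div_sub_center_pow_smul hρ n
  have hρ' : (ρ : ℂ) ≠ 0 := ofReal_ne_zero.2 hρ.ne'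
  rw [circleIntegral, intervalIntegral.integral_congr (g := fun θ =>
      I / ρ ^ n * (f (circleMap 0 ρ θ) / exp (θ * I) ^ n)) fun θ _ => by
    simp only [deriv_circleMap, circleMap_zero, sub_zero, smul_eq_mul]; field_simp; ring,
    intervalIntegral.integral_const_mul, smul_eq_mul] at hcauchy
  generalize ∫ θ in 0..2 * π, f (circleMap 0 ρ θ) / exp (θ * I) ^ n = X at hcauchy ⊢
  calc X = ρ ^ n / I * (I / ρ ^ n * X) := by field_simp
    _ = _ := by rw [hcauchy]; field_simp

theorem integral_comp_circleMap_mul_exp_pow_eq_zero (hf : DifferentiableOn ℂ f (closedBall 0 ρ))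
    (hρ : 0 < ρ) {n : ℕ} (hn : n ≠ 0) :
    ∫ θ in 0..2 * π, f (circleMap 0 ρ θ) * exp (θ * I) ^ n = 0 := by
  obtain ⟨m, rfl⟩ := Nat.exists_eq_succ_of_ne_zero hn
  have hcauchy := (((differentiableOn_pow m).smul hf).mono
    closure_ball_subset_closedBall).diffContOnCl.circleIntegral_eq_zero hρ.le
  have hρ' : (ρ : ℂ) ≠ 0 := ofReal_ne_zero.2 hρ.ne'
  rw [circleIntegral, intervalIntegral.integral_congr (g := fun θ =>
      I * ρ ^ (m + 1) * (f (circleMap 0 ρ θ) * exp (θ * I) ^ (m + 1))) fun θ _ => by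
    simp only [deriv_circleMap, circleMap_zero, Pi.smul_apply', smul_eq_mul]; ring,
    intervalIntegral.integral_const_mul] at hcauchy
  simpa [hρ', I_ne_zero] using hcauchy

theorem ofReal_im_mul_exp_pow (w : ℂ) (θ : ℝ) (n : ℕ) :
    (w.im : ℂ) * exp (θ * I) ^ n
      = (2 * I)⁻¹ * (w * exp (θ * I) ^ n - conj (w / exp (θ * I) ^ n)) := by
  have hconj : conj (exp (θ * I)) = (exp (θ * I))⁻¹ := by
    rw [← exp_conj, map_mul, conj_ofReal, conj_I, mul_neg, exp_neg]
  rw [map_div₀, map_pow, hconj, inv_pow, div_inv_eq_mul, ← sub_mul, sub_conj]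
  field_simp
  push_cast
  ring

theorem integral_im_comp_circleMap_mul_exp_pow (hf : DifferentiableOn ℂ f (closedBall 0 ρ))
    (hρ : 0 < ρ) {n : ℕ} (hn : n ≠ 0) :
    ∫ θ in 0..2 * π, ((f (circleMap 0 ρ θ)).im : ℂ) * exp (θ * I) ^ n
      = π * I * ρ ^ n * conj (iteratedDeriv n f 0) / n ! := by
  have hcont := continuous_comp_circleMap hf hρ.le
  have hint₁ : IntervalIntegrable (fun θ : ℝ => f (circleMap 0 ρ θ) * exp (θ * I) ^ n)
      volume 0 (2 * π) := (hcont.mul (by fun_prop)).intervalIntegrable _ _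
  have hint₂ : IntervalIntegrable (fun θ : ℝ => conj (f (circleMap 0 ρ θ) / exp (θ * I) ^ n))
      volume 0 (2 * π) :=
    (continuous_conj.comp (hcont.div (by fun_prop) fun θ => pow_ne_zero n (exp_ne_zero _))
      ).intervalIntegrable _ _
  simp_rw [ofReal_im_mul_exp_pow]
  rw [intervalIntegral.integral_const_mul, intervalIntegral.integral_sub hint₁ hint₂,
    intervalIntegral.intervalIntegral_conj, integral_comp_circleMap_mul_exp_pow_eq_zero hf hρ hn,
    integral_comp_circleMap_div_exp_pow hf hρ n]
  simp only [map_div₀, map_mul, map_pow, conj_ofReal, map_natCast, map_ofNat]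
  field_simp
  rw [I_sq]
  ring

theorem periodic_exp_mul_I_pow (n : ℕ) :
    Function.Periodic (fun θ : ℝ => exp (θ * I) ^ n) (2 * π) := fun θ => by
  simpa [Function.comp_def, circleMap_zero] using (periodic_circleMap 0 1).comp (· ^ n) θ

theorem setIntegral_Ioo_const_mul_exp_pow_eq_zero (c : ℂ) {n : ℕ} (hn : n ≠ 0) (t : ℝ) :
    ∫ θ in Ioo t (t + 2 * π), c * exp (θ * I) ^ n = 0 :=
  (Function.Periodic.setIntegral_Ioo_eq_intervalIntegral
    (fun θ => congrArg (c * ·) (periodic_exp_mul_I_pow n θ)) (by positivity) t).trans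
    (integral_comp_circleMap_mul_exp_pow_eq_zero (f := fun _ => c) (differentiableOn_const c)
      one_pos hn)

theorem setIntegral_Ioo_im_comp_circleMap_mul_exp_pow
    (hf : DifferentiableOn ℂ f (closedBall 0 ρ)) (hρ : 0 < ρ) {n : ℕ} (hn : n ≠ 0) (t : ℝ) :
    ∫ θ in Ioo t (t + 2 * π), ((f (circleMap 0 ρ θ)).im : ℂ) * exp (θ * I) ^ n
      = π * I * ρ ^ n * conj (iteratedDeriv n f 0) / n ! :=
  ((((periodic_circleMap 0 ρ).comp fun z => ((f z).im : ℂ)).mul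
    (periodic_exp_mul_I_pow n)).setIntegral_Ioo_eq_intervalIntegral (by positivity) t).trans
    (integral_im_comp_circleMap_mul_exp_pow hf hρ hn)

theorem eqOn_ball_of_tendsto_im_comp_circleMap {h : ℂ → ℂ} (hh : DifferentiableOn ℂ h (ball 0 1))
    {M : ℝ} (hM : ∀ ρ ∈ Ioo (0 : ℝ) 1, ∫ θ in 0..2 * π, (h (circleMap 0 ρ θ)).im ^ 2 ≤ M)
    {t c : ℝ} (hlim : ∀ᵐ θ ∂volume.restrict (Ioo t (t + 2 * π)),
      Tendsto (fun ρ => (h (circleMap 0 ρ θ)).im) (𝓝[<] 1) (𝓝 c)) :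
    EqOn h (fun _ => h 0) (ball 0 1) := by
  refine eqOn_ball_of_iteratedDeriv_eq_zero hh fun n hn => ?_
  obtain ⟨ρ, -, hρ01, hρ1⟩ := exists_seq_strictMono_tendsto' (zero_lt_one' ℝ)
  have hρ : Tendsto ρ atTop (𝓝[<] 1) := tendsto_nhdsWithin_of_tendsto_nhds_of_eventually_within
    _ hρ1 (Eventually.of_forall fun k => (hρ01 k).2)
  have hdiff (k : ℕ) : DifferentiableOn ℂ h (closedBall 0 (ρ k)) :=
    hh.mono (closedBall_subset_ball (hρ01 k).2)
  set u : ℕ → ℝ → ℝ := fun k θ => (h (circleMap 0 (ρ k) θ)).im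
  have hu (k : ℕ) : Continuous (u k) :=
    continuous_im.comp (continuous_comp_circleMap (hdiff k) (hρ01 k).1.le)
  have hL2 (k : ℕ) :
      eLpNorm (u k) 2 (volume.restrict (Ioo t (t + 2 * π))) ≤ ENNReal.ofReal √M := by
    refine eLpNorm_two_le_of_integral_sq_le ?_ ?_
    · exact (memLp_two_iff_integrable_sq (hu k).aestronglyMeasurable).2
        (((hu k).pow 2).integrableOn_Icc.mono_set Ioo_subset_Icc_self)
    · exact (((periodic_circleMap 0 (ρ k)).comp fun z => (h z).im ^ 2
        ).setIntegral_Ioo_eq_intervalIntegral (by positivity) t).trans_le (hM _ (hρ01 k))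
  have hlim' := tendsto_integral_mul_of_tendsto_ae (fun k => (hu k).aestronglyMeasurable) hL2
    (hlim.mono fun θ hθ => hθ.comp hρ) (e := fun θ => exp (θ * I) ^ n)
    (by fun_prop : Continuous _).aestronglyMeasurable (fun θ => by simp [norm_exp_ofReal_mul_I])
  simp only [u, setIntegral_Ioo_const_mul_exp_pow_eq_zero _ hn,
    setIntegral_Ioo_im_comp_circleMap_mul_exp_pow (hdiff _) (hρ01 _).1 hn] at hlim'
  have hlim₁ : Tendsto (fun k => π * I * ρ k ^ n * conj (iteratedDeriv n h 0) / n !) atTop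
      (𝓝 (π * I * 1 ^ n * conj (iteratedDeriv n h 0) / n !)) :=
    (((hρ1.ofReal.pow n).const_mul _).mul_const _).div_const _
  simpa [Real.pi_ne_zero, I_ne_zero, Nat.factorial_ne_zero] using tendsto_nhds_unique hlim₁ hlim'

end Complex

theorem intervalIntegral_im_sub_sq_le {F G : ℝ → ℂ} (hF : Continuous F) (hG : Continuous G)
    {a b : ℝ} (hab : a ≤ b) :
    ∫ θ in a..b, (F θ - G θ).im ^ 2
      ≤ 2 * (∫ θ in a..b, ‖F θ‖ ^ 2) + 2 * ∫ θ in a..b, ‖G θ‖ ^ 2 := by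
  have hpointwise (θ : ℝ) : (F θ - G θ).im ^ 2 ≤ 2 * ‖F θ‖ ^ 2 + 2 * ‖G θ‖ ^ 2 :=
    calc (F θ - G θ).im ^ 2 ≤ ‖F θ - G θ‖ ^ 2 := by
          rw [← sq_abs]; gcongr; exact abs_im_le_norm _
      _ ≤ (‖F θ‖ + ‖G θ‖) ^ 2 := by gcongr; exact norm_sub_le _ _
      _ ≤ 2 * ‖F θ‖ ^ 2 + 2 * ‖G θ‖ ^ 2 := by nlinarith [sq_nonneg (‖F θ‖ - ‖G θ‖)]
  have hint {H : ℝ → ℝ} (hH : Continuous H) : IntervalIntegrable H volume a b :=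
    hH.intervalIntegrable a b
  calc ∫ θ in a..b, (F θ - G θ).im ^ 2 ≤ ∫ θ in a..b, (2 * ‖F θ‖ ^ 2 + 2 * ‖G θ‖ ^ 2) :=
        intervalIntegral.integral_mono_on hab (hint (by fun_prop)) (hint (by fun_prop))
          fun θ _ => hpointwise θ
    _ = _ := by
        rw [intervalIntegral.integral_add (hint (by fun_prop)) (hint (by fun_prop)),
          intervalIntegral.integral_const_mul, intervalIntegral.integral_const_mul]

theorem stmt_19 (f₁ f₂ g₁ g₂ : ℂ → ℂ) (φ₁ φ₂ : ℝ → ℝ) (t₀ : ℝ)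
    (hg₁ : DifferentiableOn ℂ g₁ (ball (0 : ℂ) 1))
    (hg₂ : DifferentiableOn ℂ g₂ (ball (0 : ℂ) 1))
    (he₁ : ∀ k ∈ ball (0 : ℂ) 1, Complex.exp (g₁ k) = f₁ k)
    (he₂ : ∀ k ∈ ball (0 : ℂ) 1, Complex.exp (g₂ k) = f₂ k)
    (hH : ∃ M : ℝ, ∀ ρ : ℝ, 0 < ρ → ρ < 1 →
      (∫ θ in (0 : ℝ)..(2 * Real.pi),
          ‖g₁ ((ρ : ℂ) * Complex.exp (Complex.I * (θ : ℂ)))‖ ^ 2) ≤ M ∧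
      (∫ θ in (0 : ℝ)..(2 * Real.pi),
          ‖g₂ ((ρ : ℂ) * Complex.exp (Complex.I * (θ : ℂ)))‖ ^ 2) ≤ M)
    (hlim₁ : Filter.Tendsto f₁ (nhdsWithin 0 (ball (0 : ℂ) 1 \ {0})) (nhds 1))
    (hlim₂ : Filter.Tendsto f₂ (nhdsWithin 0 (ball (0 : ℂ) 1 \ {0})) (nhds 1))
    (hb₁ : ∀ᵐ (θ : ℝ) ∂(volume.restrict (Set.Ioo t₀ (t₀ + 2 * Real.pi))),
      Filter.Tendsto (fun ρ : ℝ => (g₁ ((ρ : ℂ) * Complex.exp (Complex.I * (θ : ℂ)))).im)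
        (nhdsWithin 1 (Set.Iio 1)) (nhds (φ₁ θ)))
    (hb₂ : ∀ᵐ (θ : ℝ) ∂(volume.restrict (Set.Ioo t₀ (t₀ + 2 * Real.pi))),
      Filter.Tendsto (fun ρ : ℝ => (g₂ ((ρ : ℂ) * Complex.exp (Complex.I * (θ : ℂ)))).im)
        (nhdsWithin 1 (Set.Iio 1)) (nhds (φ₂ θ)))
    (hc₁ : ContinuousOn φ₁ (Set.Ioo t₀ (t₀ + 2 * Real.pi)))
    (hc₂ : ContinuousOn φ₂ (Set.Ioo t₀ (t₀ + 2 * Real.pi)))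
    (hae : ∀ᵐ (θ : ℝ) ∂(volume.restrict (Set.Ioo t₀ (t₀ + 2 * Real.pi))),
      Complex.exp (-2 * Complex.I * (φ₁ θ : ℂ)) =
        Complex.exp (-2 * Complex.I * (φ₂ θ : ℂ))) :
    Set.EqOn f₁ f₂ (ball (0 : ℂ) 1) := by
  obtain ⟨M, hM⟩ := hH
  obtain ⟨c, hc⟩ := exists_forall_sub_eq_of_ae_exp_eq hc₁ hc₂ hae
  have hcirc (ρ θ : ℝ) : (ρ : ℂ) * exp (I * θ) = circleMap 0 ρ θ := by
    rw [circleMap_zero, mul_comm I]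
  simp only [hcirc] at hM hb₁ hb₂
  have hconst : ∀ z ∈ ball (0 : ℂ) 1, g₁ z - g₂ z = g₁ 0 - g₂ 0 := by
    refine eqOn_ball_of_tendsto_im_comp_circleMap (hg₁.sub hg₂) (M := 4 * M) (t := t₀) (c := c)
      (fun ρ hρ => ?_) ?_
    · have hsub := (closedBall_subset_ball hρ.2 : closedBall (0 : ℂ) ρ ⊆ ball 0 1)
      refine (intervalIntegral_im_sub_sq_le (continuous_comp_circleMap (hg₁.mono hsub) hρ.1.le)
        (continuous_comp_circleMap (hg₂.mono hsub) hρ.1.le) (by positivity)).trans ?_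
      linarith [(hM ρ hρ.1 hρ.2).1, (hM ρ hρ.1 hρ.2).2]
    · filter_upwards [hb₁, hb₂, ae_restrict_mem measurableSet_Ioo] with θ h₁ h₂ hθ
      simpa [hc θ hθ] using h₁.sub h₂
  have hexp : exp (g₁ 0 - g₂ 0) = 1 := by
    have : (𝓝[ball (0 : ℂ) 1 \ {0}] 0).NeBot := by
      rw [Set.sdiff_eq, nhdsWithin_inter_of_mem
        (mem_nhdsWithin_of_mem_nhds (ball_mem_nhds 0 one_pos))]
      infer_instance
    have hquot : f₁ =ᶠ[𝓝[ball (0 : ℂ) 1 \ {0}] 0] fun z => exp (g₁ 0 - g₂ 0) * f₂ z := by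
      filter_upwards [self_mem_nhdsWithin] with z hz
      rw [← he₁ z hz.1, ← he₂ z hz.1, ← hconst z hz.1, ← exp_add, sub_add_cancel]
    simpa using tendsto_nhds_unique (hlim₂.const_mul _) (hlim₁.congr' hquot)
  intro z hz
  rw [← he₁ z hz, ← he₂ z hz, ← sub_add_cancel (g₁ z) (g₂ z), exp_add, hconst z hz, hexp, one_mul]
end
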